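/- arXiv:math/0203090 — 2 statements merged into one kernel-verified Lean document; each statement's English description precedes it below -/
import Mathlib

section
/- Let V be a finite-dimensional real inner product space and T : V → V a skew-adjoint linear endomorphism. Then V decomposes as an orthogonal direct sum V = ker T ⊕ V_{λ₁} ⊕ ... ⊕ V_{λ_s}, where λ₁, ..., λ_s are distinct positive real numbers and on each V_{λ_k} one has T ∘ T = -λ_k² · Id. -/
open RealInnerProductSpace

/-- A skew-adjoint endomorphism of a finite-dimensional real inner product space
induces an orthogonal direct sum decomposition `V = ker T ⊕ V_{λ₁} ⊕ ... ⊕ V_{λ_s}`,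
where the `λ_k` are distinct positive reals and `V_{λ_k}` is the eigenspace of
`T ∘ T` for the eigenvalue `-λ_k²` (so `T ∘ T = -λ_k² • Id` on `V_{λ_k}`). -/
theorem skew_adjoint_orthogonal_decomposition
    {V : Type*} [NormedAddCommGroup V] [InnerProductSpace ℝ V]
    [FiniteDimensional ℝ V]
    (T : V →ₗ[ℝ] V) (hskew : ∀ x y : V, ⟪T x, y⟫ = -⟪x, T y⟫) :
    ∃ s : Finset ℝ, (∀ l ∈ s, 0 < l) ∧
      DirectSum.IsInternal
        (fun i : Option {l // l ∈ s} =>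
          Option.elim i (LinearMap.ker T)
            (fun l => Module.End.eigenspace (T ∘ₗ T) (-(l : ℝ)^2))) ∧
      (∀ i j : Option {l // l ∈ s}, i ≠ j →
        ∀ x ∈ Option.elim i (LinearMap.ker T)
            (fun l => Module.End.eigenspace (T ∘ₗ T) (-(l : ℝ)^2)),
        ∀ y ∈ Option.elim j (LinearMap.ker T)
            (fun l => Module.End.eigenspace (T ∘ₗ T) (-(l : ℝ)^2)),
        ⟪x, y⟫ = 0) := by
  classical
  set S : V →ₗ[ℝ] V := T ∘ₗ T with hS_def
  have hS : S.IsSymmetric := by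
    intro x y
    have h1 : ⟪S x, y⟫ = -⟪T x, T y⟫ := hskew (T x) y
    have h2 : ⟪T x, T y⟫ = -⟪x, S y⟫ := hskew x (T y)
    rw [h1, h2, neg_neg]
  have hSx : ∀ x : V, ⟪S x, x⟫ = -⟪T x, T x⟫ := fun x => hskew (T x) x
  -- ker S = ker T
  have hker : Module.End.eigenspace S 0 = LinearMap.ker T := by
    rw [Module.End.eigenspace_zero]
    ext x
    simp only [LinearMap.mem_ker]
    constructor
    · intro hx
      have h0 : ⟪T x, T x⟫ = 0 := by
        have := hSx x
        rw [show S x = 0 from hx] at this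
        simp only [inner_zero_left] at this
        linarith
      exact inner_self_eq_zero.mp h0
    · intro hx
      show T (T x) = 0
      rw [hx, map_zero]
  -- no positive eigenvalues of S
  have hpos : ∀ μ : ℝ, 0 < μ → Module.End.eigenspace S μ = ⊥ := by
    intro μ hμ
    rw [Submodule.eq_bot_iff]
    intro x hx
    have hx' : S x = μ • x := Module.End.mem_eigenspace_iff.mp hx
    by_contra hne
    have h1 : ⟪S x, x⟫ = μ * ⟪x, x⟫ := by rw [hx', real_inner_smul_left]
    have h2 : (0:ℝ) ≤ ⟪T x, T x⟫ := real_inner_self_nonneg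
    have h3 : (0:ℝ) < ⟪x, x⟫ := lt_of_le_of_ne real_inner_self_nonneg (Ne.symm (inner_self_ne_zero.mpr hne))
    nlinarith [hSx x]
  have hfin : {l : ℝ | 0 < l ∧ Module.End.HasEigenvalue S (-l ^ 2)}.Finite := by
    apply Set.Finite.of_finite_image (f := fun l => -l ^ 2)
    · exact (Module.End.finite_hasEigenvalue (f := S)).subset (by rintro μ ⟨l, ⟨_, hl⟩, rfl⟩; exact hl)
    · rintro a ⟨ha, -⟩ b ⟨hb, -⟩ hab
      simp only [neg_inj] at hab
      nlinarith
  set s : Finset ℝ := hfin.toFinset with hs_def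
  set F : Option {l // l ∈ s} → Submodule ℝ V :=
    fun i => Option.elim i (LinearMap.ker T)
      (fun l => Module.End.eigenspace S (-(l : ℝ)^2)) with hF_def
  -- eigenvalue attached to each index
  set μfun : Option {l // l ∈ s} → ℝ := fun i => Option.elim i 0 (fun l => -(l : ℝ)^2)
    with hμ_def
  have hspos : ∀ l ∈ s, (0:ℝ) < l := fun l hl => (hfin.mem_toFinset.mp hl).1
  have hμinj : Function.Injective μfun := by
    rintro (_ | ⟨a, ha⟩) (_ | ⟨b, hb⟩) h
    · rfl
    · exfalso
      have hb' := hspos b hb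
      simp only [hμ_def, Option.elim] at h
      nlinarith
    · exfalso
      have ha' := hspos a ha
      simp only [hμ_def, Option.elim] at h
      nlinarith
    · have ha' := hspos a ha
      have hb' := hspos b hb
      simp only [hμ_def, Option.elim, neg_inj] at h
      have : a = b := by nlinarith
      simp [this]
  have hF_eig : ∀ i, F i = Module.End.eigenspace S (μfun i) := by
    rintro (_ | ⟨l, hl⟩)
    · simpa [hF_def, hμ_def] using hker.symm
    · rfl
  have horth : ∀ i j : Option {l // l ∈ s}, i ≠ j →
      ∀ x ∈ F i, ∀ y ∈ F j, ⟪x, y⟫ = 0 := by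
    intro i j hij x hx y hy
    have hne : μfun i ≠ μfun j := fun h => hij (hμinj h)
    have hx' : x ∈ Module.End.eigenspace S (μfun i) := (hF_eig i) ▸ hx
    have hy' : y ∈ Module.End.eigenspace S (μfun j) := (hF_eig j) ▸ hy
    exact hS.orthogonalFamily_eigenspaces hne ⟨x, hx'⟩ ⟨y, hy'⟩
  have hOF : OrthogonalFamily ℝ (fun i => F i) (fun i => (F i).subtypeₗᵢ) := by
    intro i j hij v w
    exact horth i j hij v v.2 w w.2
  refine ⟨s, hspos, ?_, horth⟩
  rw [hOF.isInternal_iff]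
  rw [Submodule.orthogonal_eq_bot_iff]
  have htop : (⨆ μ : ℝ, Module.End.eigenspace S μ) = ⊤ :=
    Submodule.orthogonal_eq_bot_iff.mp hS.orthogonalComplement_iSup_eigenspaces_eq_bot
  rw [eq_top_iff, ← htop]
  refine iSup_le fun μ => ?_
  rcases lt_trichotomy μ 0 with hμ | hμ | hμ
  · by_cases h : Module.End.HasEigenvalue S μ
    · set l := Real.sqrt (-μ) with hl_def
      have hl0 : 0 < l := Real.sqrt_pos.mpr (by linarith)
      have hlsq : -l ^ 2 = μ := by
        rw [hl_def, Real.sq_sqrt (by linarith : (0:ℝ) ≤ -μ)]; ring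
      have hls : l ∈ s := hfin.mem_toFinset.mpr ⟨hl0, by rwa [hlsq]⟩
      have : Module.End.eigenspace S μ = F (some ⟨l, hls⟩) := by
        simp [hF_def, hlsq]
      rw [this]
      exact le_iSup F (some ⟨l, hls⟩)
    · have : Module.End.eigenspace S μ = ⊥ := not_not.mp h
      simp [this]
  · subst hμ
    rw [hker]
    exact le_iSup F none
  · rw [hpos μ hμ]
    exact bot_le
end

section
/- Let V be a finite-dimensional real inner product space and let J₁, J₂, J₃ : V → V be three pairwise anticommuting orthogonal complex structures (Jᵢ² = -Id, JᵢJⱼ = -JⱼJᵢ for i ≠ j, each Jᵢ skew-adjoint). Then the endomorphism P = J₁J₂J₃ is self-adjoint, satisfies P² = Id, and commutes with each Jᵢ; hence V decomposes orthogonally as V = V₊ ⊕ V₋ where V_± = ker(P ∓ Id), each V_± is invariant under all three Jᵢ, the restrictions of J₁, J₂, J₃ to V₋ satisfy the quaternionic relations J₁J₂ = J₃, and the restrictions to V₊ satisfy the anti-quaternionic relations J₁J₂ = -J₃. -/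
open RealInnerProductSpace

/-- Three pairwise anticommuting skew-adjoint complex structures `J₁, J₂, J₃` on a
finite-dimensional real inner product space: `P = J₁J₂J₃` is self-adjoint, `P² = Id`,
`P` commutes with each `Jᵢ`; `V` splits orthogonally into `V₊ ⊕ V₋` with
`V_± = ker (P ∓ Id)`, each invariant under all `Jᵢ`, and `J₁J₂ = J₃` on `V₋`
(quaternionic relations) while `J₁J₂ = -J₃` on `V₊` (anti-quaternionic relations). -/
theorem three_anticommuting_complex_structures
    {V : Type*} [NormedAddCommGroup V] [InnerProductSpace ℝ V]
    [FiniteDimensional ℝ V]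
    (J : Fin 3 → (V →ₗ[ℝ] V))
    (hcplx : ∀ i, ∀ x, J i (J i x) = -x)
    (hanti : ∀ i j, i ≠ j → ∀ x, J i (J j x) = -(J j (J i x)))
    (hskew : ∀ i, ∀ x y : V, ⟪J i x, y⟫ = -⟪x, J i y⟫) :
    let P : V →ₗ[ℝ] V := (J 0) ∘ₗ (J 1) ∘ₗ (J 2)
    let Vplus : Submodule ℝ V := LinearMap.ker (P - LinearMap.id)
    let Vminus : Submodule ℝ V := LinearMap.ker (P + LinearMap.id)
    (∀ x y : V, ⟪P x, y⟫ = ⟪x, P y⟫) ∧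
    (∀ x, P (P x) = x) ∧
    (∀ i, ∀ x, P (J i x) = J i (P x)) ∧
    IsCompl Vplus Vminus ∧
    (∀ x ∈ Vplus, ∀ y ∈ Vminus, ⟪x, y⟫ = 0) ∧
    (∀ i, ∀ x ∈ Vplus, J i x ∈ Vplus) ∧
    (∀ i, ∀ x ∈ Vminus, J i x ∈ Vminus) ∧
    (∀ x ∈ Vminus, J 0 (J 1 x) = J 2 x) ∧
    (∀ x ∈ Vplus, J 0 (J 1 x) = -(J 2 x)) := by
  intro P Vplus Vminus
  have h10 := hanti 1 0 (by decide)
  have h20 := hanti 2 0 (by decide)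
  have h21 := hanti 2 1 (by decide)
  have hPdef : ∀ x, P x = J 0 (J 1 (J 2 x)) := fun x => rfl
  -- self-adjointness
  have hsa : ∀ x y : V, ⟪P x, y⟫ = ⟪x, P y⟫ := by
    intro x y
    have key : J 2 (J 1 (J 0 y)) = -(J 0 (J 1 (J 2 y))) := by
      simp only [h10, h20, h21, hcplx, map_neg, neg_neg]
    rw [hPdef, hskew 0, hskew 1, hskew 2, key]
    simp [hPdef]
  -- commutation with each J i
  have hc0 : ∀ x, P (J 0 x) = J 0 (P x) := by
    intro x; simp only [hPdef, h10, h20, h21, hcplx, map_neg, neg_neg]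
  have hc1 : ∀ x, P (J 1 x) = J 1 (P x) := by
    intro x; simp only [hPdef, h10, h20, h21, hcplx, map_neg, neg_neg]
  have hc2 : ∀ x, P (J 2 x) = J 2 (P x) := by
    intro x; simp only [hPdef, h10, h20, h21, hcplx, map_neg, neg_neg]
  have hcomm : ∀ i, ∀ x, P (J i x) = J i (P x) := by
    intro i x
    fin_cases i
    · exact hc0 x
    · exact hc1 x
    · exact hc2 x
  -- involution
  have hPJ2 : ∀ x, P (J 2 x) = -(J 0 (J 1 x)) := by
    intro x
    rw [hPdef, hcplx 2, map_neg, map_neg]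
  have hinv : ∀ x, P (P x) = x := by
    intro x
    simp only [hPdef, h10, h20, h21, hcplx, map_neg, neg_neg]
  -- membership characterizations
  have hmemp : ∀ x : V, x ∈ Vplus ↔ P x = x := by
    intro x
    simp [Vplus, LinearMap.mem_ker, sub_eq_zero]
  have hmemm : ∀ x : V, x ∈ Vminus ↔ P x = -x := by
    intro x
    simp only [Vminus, LinearMap.mem_ker, LinearMap.add_apply, LinearMap.id_apply,
      add_eq_zero_iff_eq_neg]
  refine ⟨hsa, hinv, hcomm, ?_, ?_, ?_, ?_, ?_, ?_⟩
  · constructor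
    · rw [disjoint_iff_inf_le]
      intro x hx
      have h1 := (hmemp x).1 hx.1
      have h2 := (hmemm x).1 hx.2
      have h3 : x + x = 0 := eq_neg_iff_add_eq_zero.mp (h1.symm.trans h2)
      have h4 : (2:ℝ) • x = 0 := by rw [two_smul]; exact h3
      have h5 : x = 0 := by
        rcases smul_eq_zero.mp h4 with h | h
        · norm_num at h
        · exact h
      simp [h5]
    · rw [codisjoint_iff_le_sup]
      intro x _
      refine Submodule.mem_sup.2 ⟨(2:ℝ)⁻¹ • (x + P x), ?_, (2:ℝ)⁻¹ • (x - P x), ?_, ?_⟩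
      · rw [hmemp]
        simp [map_add, hinv, add_comm]
      · rw [hmemm]
        simp only [map_smul, map_sub, hinv]
        module
      · module
  · intro x hx y hy
    have h1 := (hmemp x).1 hx
    have h2 := (hmemm y).1 hy
    have : ⟪x, y⟫ = -⟪x, y⟫ := by
      conv_lhs => rw [← h1, hsa, h2, inner_neg_right]
    linarith
  · intro i x hx
    rw [hmemp] at hx ⊢
    rw [hcomm, hx]
  · intro i x hx
    rw [hmemm] at hx ⊢
    rw [hcomm, hx, map_neg]
  · intro x hx
    have h2 := (hmemm (J 2 x)).1 (by rw [hmemm] at hx ⊢; rw [hcomm, hx, map_neg])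
    rw [hPJ2] at h2
    exact neg_injective h2
  · intro x hx
    have h2 := (hmemp (J 2 x)).1 (by rw [hmemp] at hx ⊢; rw [hcomm, hx])
    rw [hPJ2] at h2
    rw [← h2, neg_neg]
end
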